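/- arXiv:1801.04612 — 4 statements merged into one kernel-verified Lean document; each statement's English description precedes it below -/
import Mathlib

section
/- For a real polynomial Δ all of whose zeros are real and simple, if Δ'(λ) = 0 at a real point λ, then Δ(λ)·Δ''(λ) < 0, provided Δ has degree at least 1 and Δ(λ) ≠ 0. -/
/-!
If `f` splits with roots `a`, then away from the roots `f' / f = ∑ 1 / (x - a)`, and
differentiating once more gives `f'' / f = (∑ 1 / (x - a)) ^ 2 - ∑ 1 / (x - a) ^ 2`.
At a critical point the first sum vanishes, so `f'' / f` is minus a nonempty sum of
positive squares. A real polynomial whose complex roots are all real splits over `ℝ`.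
-/

open Polynomial

namespace Polynomial

section Field

variable {K : Type*} [Field K]

theorem eval_derivative_multiset_prod_X_sub_C {S : Multiset K} {x : K} (hx : x ∉ S) :
    (derivative (S.map (X - C ·)).prod).eval x =
      (S.map (X - C ·)).prod.eval x * (S.map fun a ↦ (x - a)⁻¹).sum := by
  induction S using Multiset.induction_on with
  | empty => simp
  | cons a S ih =>
    rw [Multiset.mem_cons, not_or] at hx
    have hxa : x - a ≠ 0 := sub_ne_zero.mpr hx.1
    simp only [Multiset.map_cons, Multiset.prod_cons, Multiset.sum_cons, derivative_mul,
      derivative_X_sub_C, eval_add, eval_mul, eval_sub, eval_X, eval_C, eval_one, ih hx.2]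
    field_simp

theorem eval_derivative_derivative_multiset_prod_X_sub_C {S : Multiset K} {x : K} (hx : x ∉ S) :
    (derivative (derivative (S.map (X - C ·)).prod)).eval x =
      (S.map (X - C ·)).prod.eval x *
        ((S.map fun a ↦ (x - a)⁻¹).sum ^ 2 - (S.map fun a ↦ (x - a)⁻¹ ^ 2).sum) := by
  induction S using Multiset.induction_on with
  | empty => simp
  | cons a S ih =>
    rw [Multiset.mem_cons, not_or] at hx
    have hxa : x - a ≠ 0 := sub_ne_zero.mpr hx.1
    simp only [Multiset.map_cons, Multiset.prod_cons, Multiset.sum_cons, derivative_mul,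
      derivative_X_sub_C, derivative_one, derivative_add, eval_add, eval_mul, eval_sub, eval_X,
      eval_C, eval_one, eval_zero, ih hx.2, eval_derivative_multiset_prod_X_sub_C hx.2]
    field_simp
    ring

variable {f : K[X]} {x : K}

theorem Splits.eval_derivative_eq_mul_sum_inv (hf : f.Splits) (hx : f.eval x ≠ 0) :
    f.derivative.eval x = f.eval x * (f.roots.map fun a ↦ (x - a)⁻¹).sum := by
  have hroot : x ∉ f.roots := fun h ↦ hx (isRoot_of_mem_roots h)
  conv_lhs => rw [hf.eq_prod_roots]
  conv_rhs => enter [1]; rw [hf.eq_prod_roots]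
  rw [derivative_C_mul, eval_C_mul, eval_C_mul, eval_derivative_multiset_prod_X_sub_C hroot,
    mul_assoc]

theorem Splits.eval_derivative_derivative_eq_mul (hf : f.Splits) (hx : f.eval x ≠ 0) :
    f.derivative.derivative.eval x = f.eval x *
      ((f.roots.map fun a ↦ (x - a)⁻¹).sum ^ 2 - (f.roots.map fun a ↦ (x - a)⁻¹ ^ 2).sum) := by
  have hroot : x ∉ f.roots := fun h ↦ hx (isRoot_of_mem_roots h)
  conv_lhs => rw [hf.eq_prod_roots]
  conv_rhs => enter [1]; rw [hf.eq_prod_roots]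
  rw [derivative_C_mul, derivative_C_mul, eval_C_mul, eval_C_mul,
    eval_derivative_derivative_multiset_prod_X_sub_C hroot, mul_assoc]

end Field

theorem Splits.eval_mul_eval_derivative_derivative_neg {K : Type*} [Field K] [LinearOrder K]
    [IsStrictOrderedRing K] {f : K[X]} (hf : f.Splits) (hdeg : 0 < f.natDegree) {x : K}
    (hx : f.eval x ≠ 0) (hcrit : f.derivative.eval x = 0) :
    f.eval x * f.derivative.derivative.eval x < 0 := by
  have hsum : (f.roots.map fun a ↦ (x - a)⁻¹).sum = 0 := by
    simpa [hf.eval_derivative_eq_mul_sum_inv hx, hx] using hcrit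
  have hsq : 0 < (f.roots.map fun a ↦ (x - a)⁻¹ ^ 2).sum := by
    have hroot : x ∉ f.roots := fun h ↦ hx (isRoot_of_mem_roots h)
    simpa using Multiset.sum_lt_sum_of_nonempty (f := fun _ ↦ (0 : K))
      (hf.roots_ne_zero hdeg.ne') fun a ha ↦
        sq_pos_of_ne_zero (inv_ne_zero (sub_ne_zero.mpr (ne_of_mem_of_not_mem ha hroot).symm))
  rw [hf.eval_derivative_derivative_eq_mul hx, hsum]
  calc f.eval x * (f.eval x * (0 ^ 2 - (f.roots.map fun a ↦ (x - a)⁻¹ ^ 2).sum))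
      = -(f.eval x ^ 2 * (f.roots.map fun a ↦ (x - a)⁻¹ ^ 2).sum) := by ring
    _ < 0 := neg_neg_of_pos (mul_pos (sq_pos_of_ne_zero hx) hsq)

theorem splits_of_forall_im_roots_map_eq_zero {f : ℝ[X]}
    (h : ∀ z ∈ (f.map (algebraMap ℝ ℂ)).roots, z.im = 0) : f.Splits :=
  Splits.of_splits_map_of_injective (algebraMap ℝ ℂ).injective (IsAlgClosed.splits _)
    fun z hz ↦ ⟨z.re, Complex.ext (by simp) (by simp [h z hz])⟩

end Polynomial

theorem stmt_3_general (Δ : Polynomial ℝ) (hdeg : 1 ≤ Δ.degree)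
    (hreal : ∀ z ∈ (Δ.map (algebraMap ℝ ℂ)).roots, z.im = 0)
    (lam : ℝ) (hder : (derivative Δ).eval lam = 0) (hne : Δ.eval lam ≠ 0) :
    Δ.eval lam * (derivative (derivative Δ)).eval lam < 0 :=
  (splits_of_forall_im_roots_map_eq_zero hreal).eval_mul_eval_derivative_derivative_neg
    (natDegree_pos_iff_degree_pos.mpr (zero_lt_one.trans_le hdeg)) hne hder

/-- For a real polynomial `Δ` of degree at least 1, all of whose complex roots
are real and which is squarefree (all zeros simple), if `Δ'(λ) = 0` at a real
point `λ` with `Δ(λ) ≠ 0`, then `Δ(λ) · Δ''(λ) < 0`. -/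
theorem stmt_3 (Δ : Polynomial ℝ) (hdeg : 1 ≤ Δ.degree)
    (hsf : Squarefree Δ)
    (hreal : ∀ z ∈ (Δ.map (algebraMap ℝ ℂ)).roots, z.im = 0)
    (lam : ℝ) (hder : (derivative Δ).eval lam = 0) (hne : Δ.eval lam ≠ 0) :
    Δ.eval lam * (derivative (derivative Δ)).eval lam < 0 :=
  stmt_3_general Δ hdeg hreal lam hder hne
end

section
/- Let Δ be a real polynomial with Δ(0) = cosh(ℓ/2) > 1 for some ℓ > 0, all of whose zeros are real and simple, and such that Δ'(λ) = 0 implies |Δ(λ)| ≥ 1. Then every real zero of the polynomial Δ² - 1 has multiplicity at most 2. -/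
/-!
Since `(Δ² - 1)' = 2ΔΔ'` and `Δ = ±1` at a root of `Δ² - 1`, a root of `Δ² - 1` of multiplicity
at least 3 is a multiple root of `Δ'`. But `Δ` has `deg Δ` distinct real roots, so by Rolle's
theorem `Δ'` has a root strictly between any two consecutive ones; these already exhaust the
`deg Δ - 1` roots of `Δ'`, which are therefore all simple.
-/

open Polynomial

namespace Polynomial

theorem rootMultiplicity_sq_sub_one_le {R : Type*} [CommRing R] [IsDomain R] [CharZero R]
    (f : R[X]) (x : R) :
    (f ^ 2 - 1).rootMultiplicity x ≤ (derivative f).rootMultiplicity x + 1 := by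
  by_cases hroot : (f ^ 2 - 1).IsRoot x
  swap
  · simp [rootMultiplicity_eq_zero hroot]
  have hle := (f ^ 2 - 1).rootMultiplicity_sub_one_le_derivative_rootMultiplicity x
  rcases eq_or_ne (derivative (f ^ 2 - 1)) 0 with hzero | hne
  · rw [hzero, rootMultiplicity_zero] at hle
    omega
  have hderiv : derivative (f ^ 2 - 1) = C 2 * f * derivative f := by
    rw [derivative_sub, derivative_one, sub_zero, derivative_sq]
  have hfactor : ¬ (C 2 * f).IsRoot x := by
    have hfx : f.eval x ≠ 0 := fun h => by simp [h] at hroot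
    simpa [IsRoot] using hfx
  rw [hderiv, rootMultiplicity_mul (hderiv ▸ hne), rootMultiplicity_eq_zero hfactor] at hle
  omega

theorem map_ofReal_roots_le_of_forall_im_eq_zero {p : ℝ[X]}
    (hreal : ∀ z ∈ (p.map (algebraMap ℝ ℂ)).roots, z.im = 0) :
    (p.map (algebraMap ℝ ℂ)).roots ≤ p.roots.map (algebraMap ℝ ℂ) := by
  classical
  refine Multiset.le_iff_count.mpr fun z => ?_
  by_cases hz : z ∈ (p.map (algebraMap ℝ ℂ)).roots
  · have hz_real : z = algebraMap ℝ ℂ z.re := Complex.ext rfl (by simp [hreal z hz])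
    rw [hz_real, count_roots, ← eq_rootMultiplicity_map (algebraMap ℝ ℂ).injective,
      Multiset.count_map_eq_count' _ _ (algebraMap ℝ ℂ).injective, count_roots]
  · simp [Multiset.count_eq_zero_of_notMem hz]

theorem card_roots_eq_natDegree_of_forall_im_eq_zero {p : ℝ[X]}
    (hreal : ∀ z ∈ (p.map (algebraMap ℝ ℂ)).roots, z.im = 0) :
    Multiset.card p.roots = p.natDegree := by
  refine le_antisymm (card_roots' p) ?_
  calc p.natDegree = Multiset.card (p.map (algebraMap ℝ ℂ)).roots :=
        (IsAlgClosed.card_roots_map_eq_natDegree_of_injective p (algebraMap ℝ ℂ).injective).symm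
    _ ≤ Multiset.card (p.roots.map (algebraMap ℝ ℂ)) :=
        Multiset.card_le_card (map_ofReal_roots_le_of_forall_im_eq_zero hreal)
    _ = Multiset.card p.roots := Multiset.card_map _ _

theorem nodup_roots_derivative {p : ℝ[X]} (hcard : Multiset.card p.roots = p.natDegree)
    (hnodup : p.roots.Nodup) : (derivative p).roots.Nodup := by
  rw [← Multiset.toFinset_card_eq_card_iff_nodup]
  have hrolle := p.card_roots_toFinset_le_derivative
  rw [Multiset.toFinset_card_of_nodup hnodup, hcard] at hrolle
  have hdeg := (card_roots' (derivative p)).trans (natDegree_derivative_le p)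
  have := Multiset.toFinset_card_le (derivative p).roots
  omega

end Polynomial

theorem stmt_9_general (Δ : Polynomial ℝ)
    (hsf : Squarefree Δ)
    (hreal : ∀ z ∈ (Δ.map (algebraMap ℝ ℂ)).roots, z.im = 0) :
    ∀ x : ℝ, (Δ ^ 2 - 1).rootMultiplicity x ≤ 2 := by
  intro x
  have hsimple : (derivative Δ).roots.Nodup :=
    nodup_roots_derivative (card_roots_eq_natDegree_of_forall_im_eq_zero hreal)
      (nodup_roots (PerfectField.separable_iff_squarefree.mpr hsf))
  have hderiv : (derivative Δ).rootMultiplicity x ≤ 1 :=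
    count_roots (derivative Δ) ▸ Multiset.nodup_iff_count_le_one.mp hsimple x
  have := rootMultiplicity_sq_sub_one_le Δ x
  omega

/-- Let `Δ` be a real polynomial with `Δ(0) = cosh(ℓ/2)` for some `ℓ > 0`, all
of whose complex roots are real and simple, and such that `Δ'(λ) = 0` implies
`|Δ(λ)| ≥ 1`.  Then every real zero of `Δ² - 1` has multiplicity at most 2. -/
theorem stmt_9 (ℓ : ℝ) (hℓ : 0 < ℓ) (Δ : Polynomial ℝ)
    (h0 : Δ.eval 0 = Real.cosh (ℓ / 2))
    (hsf : Squarefree Δ)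
    (hreal : ∀ z ∈ (Δ.map (algebraMap ℝ ℂ)).roots, z.im = 0)
    (hcrit : ∀ lam : ℝ, (derivative Δ).eval lam = 0 → 1 ≤ |Δ.eval lam|) :
    ∀ x : ℝ, (Δ ^ 2 - 1).rootMultiplicity x ≤ 2 :=
  stmt_9_general Δ hsf hreal
end

section
/- Let Δ be a real polynomial with Δ(0) > 1. Then 0 is not a root of Δ² - 1, and the number of positive roots of Δ² - 1 (counted with multiplicity) is even, as is the number of negative roots, provided all roots of Δ² - 1 are real. -/
/-!
All roots of `f = Δ² - 1` being real, `f` splits over `ℝ`, so `f(0) = lc(f) · ∏ (0 - r)` over its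
roots `r`. Since `lc(f) = lc(Δ)² > 0` and `f(0) = Δ(0)² - 1 > 0`, this product is positive, so an
even number of its factors `-r` are negative: `f` has an even number of positive roots. It has
`deg f = 2 deg Δ` roots in total, so the number of negative roots is even as well.
-/

open Polynomial

section

variable {R : Type*} [CommRing R] [LinearOrder R] [IsStrictOrderedRing R]

theorem Multiset.prod_pos_iff_even_card_filter_neg {s : Multiset R} (hs : (0 : R) ∉ s) :
    0 < s.prod ↔ Even (Multiset.card (s.filter (· < 0))) := by
  induction s using Multiset.induction_on with
  | empty => simp
  | cons a s ih =>
    rw [Multiset.mem_cons, not_or] at hs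
    rw [Multiset.prod_cons, Multiset.filter_cons]
    rcases (Ne.symm hs.1).lt_or_gt with ha | ha
    · have hprod : s.prod ≠ 0 := Multiset.prod_ne_zero hs.2
      rw [if_pos ha, Multiset.singleton_add, Multiset.card_cons, Nat.even_add_one, ← ih hs.2,
        ← smul_eq_mul, smul_pos_iff_of_neg_left ha, not_lt, hprod.le_iff_lt]
    · rw [if_neg ha.not_gt, zero_add, mul_pos_iff_of_pos_left ha, ih hs.2]

namespace Polynomial

theorem Splits.card_roots_filter_pos_add_card_roots_filter_neg {f : R[X]} (hf : f.Splits)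
    (h0 : ¬ f.IsRoot 0) :
    Multiset.card (f.roots.filter (0 < ·)) + Multiset.card (f.roots.filter (· < 0)) =
      f.natDegree := by
  rw [hf.natDegree_eq_card_roots, ← Multiset.card_add]
  conv_rhs => rw [← Multiset.filter_add_not (0 < ·) f.roots]
  congr 2
  refine Multiset.filter_congr fun x hx => ?_
  have : x ≠ 0 := by rintro rfl; exact h0 (isRoot_of_mem_roots hx)
  rw [not_lt, this.le_iff_lt]

theorem Splits.even_card_roots_filter_pos {f : R[X]} (hf : f.Splits)
    (h : 0 < f.leadingCoeff * f.eval 0) : Even (Multiset.card (f.roots.filter (0 < ·))) := by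
  have h0 : ¬ f.IsRoot 0 := fun h0 => by simp [h0.eq_zero] at h
  rw [hf.eval_eq_prod_roots, ← mul_assoc] at h
  have hprod := pos_of_mul_pos_right h (mul_self_nonneg _)
  rw [Multiset.prod_pos_iff_even_card_filter_neg, Multiset.filter_map, Multiset.card_map] at hprod
  · simpa only [Function.comp_def, sub_neg] using hprod
  · rw [Multiset.mem_map]
    rintro ⟨x, hx, hx0⟩
    rw [sub_eq_zero] at hx0
    exact h0 (hx0 ▸ isRoot_of_mem_roots hx)

theorem splits_of_forall_im_eq_zero {f : ℝ[X]}
    (hf : ∀ z ∈ (f.map (algebraMap ℝ ℂ)).roots, z.im = 0) : f.Splits :=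
  (IsAlgClosed.splits _).of_splits_map (algebraMap ℝ ℂ) fun z hz =>
    ⟨z.re, Complex.ext (by simp) (by simp [hf z hz])⟩

theorem natDegree_sq_sub_one (p : R[X]) : (p ^ 2 - 1).natDegree = 2 * p.natDegree := by
  rw [← C_1, natDegree_sub_C, natDegree_pow]

theorem leadingCoeff_sq_sub_one_pos {p : R[X]} (hp : 0 < p.degree) :
    0 < (p ^ 2 - 1).leadingCoeff := by
  have hsq : 0 < (p ^ 2).degree := by
    rw [← natDegree_pos_iff_degree_pos] at hp ⊢
    rw [natDegree_pow]
    omega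
  rw [leadingCoeff_sub_of_degree_lt (by rwa [degree_one]), leadingCoeff_pow]
  exact sq_pos_of_ne_zero (leadingCoeff_ne_zero.mpr (ne_zero_of_degree_gt hp))

end Polynomial

end

/-- Let `Δ` be a nonconstant real polynomial with `Δ(0) > 1` such that all
complex roots of `Δ² - 1` are real.  Then `0` is not a root of `Δ² - 1`, and
the number of positive roots of `Δ² - 1` (with multiplicity) is even, as is
the number of negative roots. -/
theorem stmt_10 (Δ : Polynomial ℝ) (hdeg : 1 ≤ Δ.degree)
    (h0 : 1 < Δ.eval 0)
    (hreal : ∀ z ∈ ((Δ ^ 2 - 1).map (algebraMap ℝ ℂ)).roots, z.im = 0) :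
    ¬ (Δ ^ 2 - 1).IsRoot 0 ∧
    Even (Multiset.card ((Δ ^ 2 - 1).roots.filter fun x => 0 < x)) ∧
    Even (Multiset.card ((Δ ^ 2 - 1).roots.filter fun x => x < 0)) := by
  have hsplits := splits_of_forall_im_eq_zero hreal
  have heval : 0 < (Δ ^ 2 - 1).eval 0 := by
    rw [eval_sub, eval_pow, eval_one]
    nlinarith
  have hlc := leadingCoeff_sq_sub_one_pos (zero_lt_one.trans_le hdeg)
  have hpos := hsplits.even_card_roots_filter_pos (mul_pos hlc heval)
  refine ⟨heval.ne', hpos, ?_⟩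
  have hcard := hsplits.card_roots_filter_pos_add_card_roots_filter_neg heval.ne'
  rw [natDegree_sq_sub_one] at hcard
  exact (Nat.even_add.mp (hcard ▸ even_two_mul _)).mp hpos
end

section
/- The Riccati-type function Λ(x) = (g'(x)/g(x))·cosh²((x-a)/2) - (1/2)·sinh((x-a)/2)·cosh((x-a)/2), where g is a nonvanishing solution of -g'' + g/4 = 0 on an interval, satisfies Λ'(x) = -Λ(x)²·cosh((x-a)/2)⁻² on that interval. -/
/-!
The logarithmic derivative `u = g'/g` of a nonvanishing solution of `g'' = g/4` solves the
Riccati equation `u' = 1/4 - u²`. Writing `c = cosh ((x - a)/2)` and `s = sinh ((x - a)/2)`,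
we have `Λ = c (u c - s/2)`, and differentiating gives
`Λ' = (1/4 - u²) c² + u c s - (c² + s²)/4 = -(u c - s/2)² = -(Λ / c)²`.
-/

open Real

theorem HasDerivAt.div_riccati {g g' : ℝ → ℝ} {k x : ℝ} (hg : HasDerivAt g (g' x) x)
    (hg' : HasDerivAt g' (k * g x) x) (hx : g x ≠ 0) :
    HasDerivAt (fun y => g' y / g y) (k - (g' x / g x) ^ 2) x := by
  refine (hg'.div hg hx).congr_deriv ?_
  field_simp

theorem hasDerivAt_riccati_mul_cosh_sq_sub {u : ℝ → ℝ} (a : ℝ) {x : ℝ}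
    (hu : HasDerivAt u (1 / 4 - u x ^ 2) x) :
    HasDerivAt
      (fun y => u y * cosh ((y - a) / 2) ^ 2 - 1 / 2 * sinh ((y - a) / 2) * cosh ((y - a) / 2))
      (-(u x * cosh ((x - a) / 2) ^ 2 - 1 / 2 * sinh ((x - a) / 2) * cosh ((x - a) / 2)) ^ 2 *
        (cosh ((x - a) / 2))⁻¹ ^ 2) x := by
  have ht : HasDerivAt (fun y : ℝ => (y - a) / 2) (1 / 2) x := by
    simpa using ((hasDerivAt_id x).sub_const a).div_const 2
  have hc := ht.cosh
  have hs := ht.sinh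
  refine ((hu.mul (hc.pow 2)).sub ((hs.const_mul (1 / 2)).mul hc)).congr_deriv ?_
  have hc0 : cosh ((x - a) / 2) ≠ 0 := (cosh_pos _).ne'
  simp only [Pi.pow_apply, Nat.cast_ofNat, Nat.add_one_sub_one, pow_one]
  field_simp
  ring

theorem stmt_14_general (a : ℝ) (I : Set ℝ) (g g' : ℝ → ℝ)
    (hg : ∀ x ∈ I, HasDerivAt g (g' x) x)
    (hg' : ∀ x ∈ I, HasDerivAt g' (g x / 4) x)
    (hgne : ∀ x ∈ I, g x ≠ 0) :
    let Λ : ℝ → ℝ := fun x =>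
      g' x / g x * Real.cosh ((x - a) / 2) ^ 2 -
        1 / 2 * Real.sinh ((x - a) / 2) * Real.cosh ((x - a) / 2)
    ∀ x ∈ I, HasDerivAt Λ (-(Λ x) ^ 2 * (Real.cosh ((x - a) / 2))⁻¹ ^ 2) x := by
  intro Λ x hx
  have hg'' : HasDerivAt g' (1 / 4 * g x) x := (hg' x hx).congr_deriv (by ring)
  exact hasDerivAt_riccati_mul_cosh_sq_sub a ((hg x hx).div_riccati hg'' (hgne x hx))

/-- The Riccati-type function
`Λ(x) = (g'(x)/g(x)) cosh²((x-a)/2) - (1/2) sinh((x-a)/2) cosh((x-a)/2)`,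
where `g` is a nonvanishing solution of `-g'' + g/4 = 0` on an open interval,
satisfies `Λ' = -Λ² cosh((x-a)/2)⁻²` on that interval. -/
theorem stmt_14 (a : ℝ) (I : Set ℝ) (hI : IsOpen I) (g g' : ℝ → ℝ)
    (hg : ∀ x ∈ I, HasDerivAt g (g' x) x)
    (hg' : ∀ x ∈ I, HasDerivAt g' (g x / 4) x)
    (hgne : ∀ x ∈ I, g x ≠ 0) :
    let Λ : ℝ → ℝ := fun x =>
      g' x / g x * Real.cosh ((x - a) / 2) ^ 2 -
        1 / 2 * Real.sinh ((x - a) / 2) * Real.cosh ((x - a) / 2)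
    ∀ x ∈ I, HasDerivAt Λ (-(Λ x) ^ 2 * (Real.cosh ((x - a) / 2))⁻¹ ^ 2) x :=
  stmt_14_general a I g g' hg hg' hgne
end
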